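/- Suppose c : ℕ → ℝ≥0 satisfies, for constants p ≥ 2, A > 0, and all sufficiently large n, c(n) ≤ A·n·(log₂ n)³·log₂ log₂ n + 2·(n^{1/2}/(log₂ n)^p)·c(⌈n^{1/2}·(log₂ n)^p⌉), with c bounded on an initial segment. Then c(n) = O(n·(log₂ n)³·log₂ log₂ n). -/
import Mathlib

open Real Filter
set_option maxHeartbeats 1000000 in

theorem construction_time_recurrence
    (p : ℕ) (hp : 2 ≤ p) (A : ℝ) (hA : 0 < A) (N₀ : ℕ) (B : ℝ)
    (c : ℕ → ℝ) (hc0 : ∀ n, 0 ≤ c n)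
    (hrec : ∀ n : ℕ, N₀ ≤ n →
      c n ≤ A * n * (Real.logb 2 n) ^ 3 * Real.logb 2 (Real.logb 2 n) +
        2 * ((n : ℝ) ^ ((1 : ℝ) / 2) / (Real.logb 2 n) ^ p) *
          c ⌈(n : ℝ) ^ ((1 : ℝ) / 2) * (Real.logb 2 n) ^ p⌉₊)
    (hbase : ∀ n : ℕ, n < N₀ → c n ≤ B) :
    ∃ C : ℝ, ∃ N₁ : ℕ, ∀ n : ℕ, N₁ ≤ n →
      c n ≤ C * n * (Real.logb 2 n) ^ 3 * Real.logb 2 (Real.logb 2 n) := by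
  have h2 : (1:ℝ) < 2 := one_lt_two
  -- eventual condition (c): (logb 2 x)^p ≤ x^(1/2)/2
  have hc_ev : ∀ᶠ x : ℝ in atTop, (Real.logb 2 x) ^ p ≤ x ^ ((1:ℝ)/2) / 2 := by
    have h1 : Tendsto (fun x : ℝ => (Real.log x) ^ (p:ℝ) / x ^ ((1:ℝ)/2)) atTop (nhds 0) :=
      (isLittleO_log_rpow_rpow_atTop (p:ℝ) (by norm_num)).tendsto_div_nhds_zero
    have hε : (0:ℝ) < (Real.log 2) ^ p / 2 := by positivity
    filter_upwards [h1.eventually (gt_mem_nhds hε), eventually_ge_atTop (1:ℝ)] with x hx hx1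
    have hx0 : (0:ℝ) < x := by linarith
    have hs0 : (0:ℝ) < x ^ ((1:ℝ)/2) := Real.rpow_pos_of_pos hx0 _
    rw [Real.rpow_natCast] at hx
    have hlog : (Real.log x) ^ p < (Real.log 2) ^ p / 2 * x ^ ((1:ℝ)/2) :=
      (div_lt_iff₀ hs0).mp hx
    have hl2 : (0:ℝ) < (Real.log 2) ^ p := by positivity
    rw [Real.logb, div_pow, div_le_iff₀ hl2]
    nlinarith [hl2, hs0]
  -- eventual condition (d): 1 + p * logb 2 (logb 2 x) ≤ logb 2 x / 10
  have hd_ev : ∀ᶠ x : ℝ in atTop,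
      1 + (p:ℝ) * Real.logb 2 (Real.logb 2 x) ≤ Real.logb 2 x / 10 := by
    have hy : ∀ᶠ y : ℝ in atTop, 1 + (p:ℝ) * Real.logb 2 y ≤ y / 10 := by
      have h1 : Tendsto (fun y : ℝ => Real.log y / y) atTop (nhds 0) := by
        have := Real.isLittleO_log_id_atTop.tendsto_div_nhds_zero
        simpa using this
      have hε : (0:ℝ) < Real.log 2 / (20 * ((p:ℝ) + 1)) := by positivity
      filter_upwards [h1.eventually (gt_mem_nhds hε), eventually_ge_atTop (20:ℝ)] with y h1y h2y
      have hy0 : (0:ℝ) < y := by linarith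
      have hlog2 : (0:ℝ) < Real.log 2 := Real.log_pos h2
      have h3 : Real.log y < Real.log 2 / (20 * ((p:ℝ) + 1)) * y := (div_lt_iff₀ hy0).mp h1y
      rw [Real.logb]
      have hp0 : (0:ℝ) ≤ (p:ℝ) := Nat.cast_nonneg p
      rw [div_mul_eq_mul_div] at h3
      have h3' : Real.log y * (20 * ((p:ℝ) + 1)) < Real.log 2 * y :=
        (lt_div_iff₀ (by positivity)).mp h3
      have h4 : Real.log y / Real.log 2 ≤ y / (20 * ((p:ℝ) + 1)) := by
        rw [div_le_div_iff₀ hlog2 (by positivity)]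
        linarith
      have h5 : (p:ℝ) * (Real.log y / Real.log 2) ≤ (p:ℝ) * (y / (20 * ((p:ℝ) + 1))) :=
        mul_le_mul_of_nonneg_left h4 hp0
      have h6 : (p:ℝ) * (y / (20 * ((p:ℝ) + 1))) ≤ y / 20 := by
        rw [mul_div_assoc', div_le_div_iff₀ (by positivity) (by norm_num : (0:ℝ) < 20)]
        nlinarith
      linarith
    exact (Real.tendsto_logb_atTop h2).eventually hy
  have hcast : Tendsto (fun n : ℕ => (n:ℝ)) atTop atTop := tendsto_natCast_atTop_atTop
  have hnat : ∀ᶠ n : ℕ in atTop, N₀ ≤ n ∧ (400:ℝ) ≤ (n:ℝ) ∧ 10 ≤ Real.logb 2 (n:ℝ) ∧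
      (Real.logb 2 (n:ℝ)) ^ p ≤ (n:ℝ) ^ ((1:ℝ)/2) / 2 ∧
      1 + (p:ℝ) * Real.logb 2 (Real.logb 2 (n:ℝ)) ≤ Real.logb 2 (n:ℝ) / 10 := by
    filter_upwards [eventually_ge_atTop N₀, hcast.eventually (eventually_ge_atTop (400:ℝ)),
      ((Real.tendsto_logb_atTop h2).comp hcast).eventually (eventually_ge_atTop (10:ℝ)),
      hcast.eventually hc_ev, hcast.eventually hd_ev] with n a b c' d e
    exact ⟨a, b, c', d, e⟩
  obtain ⟨N₁, hN₁⟩ := eventually_atTop.mp hnat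
  -- bound on the initial segment
  set B' : ℝ := ∑ k ∈ Finset.range N₁, c k with hB'def
  have hB'0 : 0 ≤ B' := Finset.sum_nonneg fun k _ => hc0 k
  have hB' : ∀ k : ℕ, k < N₁ → c k ≤ B' := by
    intro k hk
    exact Finset.single_le_sum (fun i _ => hc0 i) (Finset.mem_range.mpr hk)
  set C : ℝ := 10 * A + 2 * B' + 1 with hCdef
  have hC0 : 0 < C := by positivity
  refine ⟨C, N₁, ?_⟩
  intro n
  induction n using Nat.strong_induction_on with
  | _ n IH =>
    intro hn
    obtain ⟨hN0, hx400, hL10, hLp, hd⟩ := hN₁ n hn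
    set x : ℝ := (n:ℝ) with hxdef
    set Ln : ℝ := Real.logb 2 x with hLndef
    set LLn : ℝ := Real.logb 2 Ln with hLLndef
    set s : ℝ := x ^ ((1:ℝ)/2) with hsdef
    have hx0 : (0:ℝ) < x := by linarith
    have hs0 : (0:ℝ) < s := Real.rpow_pos_of_pos hx0 _
    have hsq : s * s = x := by
      rw [hsdef, ← Real.rpow_add hx0]; norm_num
    have hs20 : (20:ℝ) ≤ s := by nlinarith
    have hLp1 : (1:ℝ) ≤ Ln ^ p := one_le_pow₀ (by linarith)
    have hLppos : (0:ℝ) < Ln ^ p := by positivity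
    have hLL1 : 1 ≤ LLn := by
      rw [hLLndef, show (1:ℝ) = Real.logb 2 2 from (Real.logb_self_eq_one one_lt_two).symm]
      exact Real.logb_le_logb_of_le h2 (by norm_num) (by linarith)
    have hcube : (1000:ℝ) ≤ Ln ^ 3 := by
      calc (1000:ℝ) = 10 ^ 3 := by norm_num
        _ ≤ Ln ^ 3 := pow_le_pow_left₀ (by norm_num) hL10 3
    set m : ℕ := ⌈s * Ln ^ p⌉₊ with hmdef
    have hy20 : (20:ℝ) ≤ s * Ln ^ p :=
      le_trans hs20 (le_mul_of_one_le_right (le_of_lt hs0) hLp1)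
    have hm_ge : s * Ln ^ p ≤ (m:ℝ) := Nat.le_ceil _
    have hm_ub : (m:ℝ) < s * Ln ^ p + 1 := Nat.ceil_lt_add_one (by positivity)
    have hm20 : (20:ℝ) ≤ (m:ℝ) := le_trans hy20 hm_ge
    have hmx : (m:ℝ) < x := by nlinarith [mul_le_mul_of_nonneg_left hLp (le_of_lt hs0)]
    have hmn : m < n := by rw [hxdef] at hmx; exact_mod_cast hmx
    set Lm : ℝ := Real.logb 2 (m:ℝ) with hLmdef
    have hLm1 : 1 ≤ Lm := by
      rw [hLmdef, show (1:ℝ) = Real.logb 2 2 from (Real.logb_self_eq_one one_lt_two).symm]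
      exact Real.logb_le_logb_of_le h2 (by norm_num) (by linarith)
    have hmub2 : (m:ℝ) ≤ 2 * (s * Ln ^ p) := by nlinarith [hm_ub, hy20]
    have hLm : Lm ≤ (6/10) * Ln := by
      have h1 : Lm ≤ Real.logb 2 (2 * (s * Ln ^ p)) :=
        Real.logb_le_logb_of_le h2 (by linarith) hmub2
      have h2' : Real.logb 2 (2 * (s * Ln ^ p)) = 1 + (1/2) * Ln + (p:ℝ) * LLn := by
        rw [Real.logb_mul (by norm_num) (by positivity),
            Real.logb_mul (by positivity) (by positivity),
            Real.logb_self_eq_one one_lt_two, hsdef,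
            Real.logb_rpow_eq_mul_logb_of_pos hx0, Real.logb_pow]
        rw [hLLndef, hLndef]; ring
      rw [h2'] at h1
      linarith
    have hLLm : Real.logb 2 Lm ≤ LLn :=
      Real.logb_le_logb_of_le h2 (by linarith) (by linarith)
    have hLLm0 : 0 ≤ Real.logb 2 Lm := Real.logb_nonneg h2 hLm1
    have hdiv : s / Ln ^ p ≤ s := div_le_self (le_of_lt hs0) hLp1
    have hdiv0 : (0:ℝ) ≤ s / Ln ^ p := by positivity
    have hrecn := hrec n hN0
    have hT0 : (0:ℝ) ≤ x * Ln ^ 3 * LLn := by positivity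
    have h1T : (1:ℝ) ≤ Ln ^ 3 * LLn := by nlinarith
    have hxT : x ≤ x * Ln ^ 3 * LLn := by nlinarith [h1T, hx0]
    have hAT : 0 ≤ A * (x * Ln ^ 3 * LLn) := by positivity
    -- identify the ceiling term in hrec with m
    have hrecn' : c n ≤ A * x * Ln ^ 3 * LLn + 2 * (s / Ln ^ p) * c m := hrecn
    have hIHm : N₁ ≤ m → c m ≤ C * m * Lm ^ 3 * Real.logb 2 Lm := fun h => IH m hmn h
    clear_value B' C x Ln LLn s m Lm
    clear hrec hrecn hbase hnat hc_ev hd_ev hcast hN₁ IH hmdef hLmdef hsdef hLndef hLLndef hxdef hB'def hmn hn hN0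
    by_cases hcase : m < N₁
    · -- base case: c m ≤ B'
      have hcm : c m ≤ B' := hB' m hcase
      have e1 : 2 * (s / Ln ^ p) * c m ≤ 2 * x * B' := by
        have hsx : s ≤ x := by nlinarith
        exact mul_le_mul (by linarith) hcm (hc0 m) (by linarith)
      have e2 : 2 * x * B' ≤ 2 * B' * (x * Ln ^ 3 * LLn) := by nlinarith
      calc c n ≤ A * x * Ln ^ 3 * LLn + 2 * x * B' := by linarith
        _ ≤ C * x * Ln ^ 3 * LLn := by rw [hCdef]; nlinarith
    · -- recursive case
      push_neg at hcase
      have hcm : c m ≤ C * m * Lm ^ 3 * Real.logb 2 Lm := hIHm hcase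
      have f1 : c m ≤ C * m * ((6/10) * Ln) ^ 3 * LLn := by
        calc c m ≤ C * m * Lm ^ 3 * Real.logb 2 Lm := hcm
          _ ≤ C * m * ((6/10) * Ln) ^ 3 * LLn := by
              gcongr
              all_goals first | exact le_of_lt hC0 | linarith | positivity
      have f2 : 2 * (s / Ln ^ p) * (m:ℝ) ≤ (21/10) * x := by
        have hd1 : (s / Ln ^ p) * Ln ^ p = s := div_mul_cancel₀ s (ne_of_gt hLppos)
        nlinarith [mul_le_mul_of_nonneg_left (le_of_lt hm_ub) hdiv0]
      have f3 : 2 * (s / Ln ^ p) * c m ≤ (C * ((6/10) * Ln) ^ 3 * LLn) * ((21/10) * x) := by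
        have g1 : 2 * (s / Ln ^ p) * c m ≤ 2 * (s / Ln ^ p) * (C * m * ((6/10) * Ln) ^ 3 * LLn) :=
          mul_le_mul_of_nonneg_left f1 (by positivity)
        have g2 : 2 * (s / Ln ^ p) * (C * m * ((6/10) * Ln) ^ 3 * LLn)
            = (C * ((6/10) * Ln) ^ 3 * LLn) * (2 * (s / Ln ^ p) * (m:ℝ)) := by ring
        have g3 : (0:ℝ) ≤ C * ((6/10) * Ln) ^ 3 * LLn := by positivity
        calc 2 * (s / Ln ^ p) * c m ≤ (C * ((6/10) * Ln) ^ 3 * LLn) * (2 * (s / Ln ^ p) * (m:ℝ)) := by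
              rw [← g2]; exact g1
          _ ≤ (C * ((6/10) * Ln) ^ 3 * LLn) * ((21/10) * x) := mul_le_mul_of_nonneg_left f2 g3
      have key : (C * ((6/10) * Ln) ^ 3 * LLn) * ((21/10) * x) = (4536/10000) * C * (x * Ln ^ 3 * LLn) := by
        ring
      have hAC : A ≤ C / 10 := by linarith
      have hCT : 0 ≤ C * (x * Ln ^ 3 * LLn) := mul_nonneg (le_of_lt hC0) hT0
      calc c n ≤ A * x * Ln ^ 3 * LLn + (4536/10000) * C * (x * Ln ^ 3 * LLn) := by
            rw [← key]; linarith
        _ ≤ C * x * Ln ^ 3 * LLn := by nlinarith
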